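/- arXiv:2509.12359 — 6 statements merged into one kernel-verified Lean document; each statement's English description precedes it below -/
import Mathlib

section
/- Let (Ω, 𝔽, P) be a probability space, Φ : Ω → ℝ a random variable, and R_s > 0. Define the fractional equivocation Λ : Ω → ℝ by Λ(ω) = 0 if Φ(ω) ≤ 1, Λ(ω) = log₂(Φ(ω))/R_s if 1 < Φ(ω) < 2^{R_s}, and Λ(ω) = 1 if Φ(ω) ≥ 2^{R_s}. Then the average fractional equivocation satisfies E[Λ] = 1 − (1/log(2^{R_s})) · ∫_1^{2^{R_s}} F_Φ(z)/z dz, where F_Φ(z) = P(Φ ≤ z) is the CDF of Φ and log denotes the natural logarithm. -/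
/-!
With `c = 2^Rs`, `log c · Λ = log (min (max Φ 1) c)`, which is the integral `∫₁ᶜ 𝟙{z < Φ} dz / z`.
Taking expectations and exchanging the integrals (Fubini) turns `𝟙{z < Φ}` into
`P(Φ > z) = 1 - F_Φ(z)`, while `∫₁ᶜ dz / z = log c`.
-/

open MeasureTheory Set Real Function

theorem integral_integral_indicator_Iio {Ω : Type*} [MeasurableSpace Ω] (P : Measure Ω)
    [IsFiniteMeasure P] (ν : Measure ℝ) [SFinite ν] {X : Ω → ℝ} (hX : Measurable X)
    {f : ℝ → ℝ} (hf : Integrable f ν) :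
    ∫ ω, ∫ z, (Iio (X ω)).indicator f z ∂ν ∂P = ∫ z, P.real {ω | z < X ω} * f z ∂ν := by
  have hint : Integrable (uncurry fun ω z => (Iio (X ω)).indicator f z) (P.prod ν) := by
    have hs : MeasurableSet {p : Ω × ℝ | p.2 < X p.1} :=
      measurableSet_lt measurable_snd (hX.comp measurable_fst)
    refine ((hf.comp_snd P).indicator hs).congr (ae_of_all _ fun p => ?_)
    simp [indicator_apply, uncurry]
  rw [integral_integral_swap hint]
  refine integral_congr_ae (ae_of_all _ fun z => ?_)
  have hind : ∀ ω, (Iio (X ω)).indicator f z = {ω | z < X ω}.indicator (fun _ => f z) ω :=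
    fun ω => by simp [indicator_apply]
  simp only [hind]
  rw [integral_indicator_const _ (measurableSet_lt measurable_const hX), smul_eq_mul]

theorem integral_Ioo_one_inv {b : ℝ} (hb : 1 ≤ b) : ∫ z in Ioo 1 b, z⁻¹ = log b := by
  rw [← integral_Ioc_eq_integral_Ioo, ← intervalIntegral.integral_of_le hb,
    integral_inv_of_pos one_pos (by linarith), div_one]

theorem integral_Ioc_one_indicator_Iio_inv {c : ℝ} (hc : 1 ≤ c) (x : ℝ) :
    ∫ z in Ioc 1 c, (Iio x).indicator (fun z => z⁻¹) z =
      if x ≤ 1 then 0 else if x < c then log x else log c := by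
  rw [integral_Ioc_eq_integral_Ioo, setIntegral_indicator measurableSet_Iio]
  split_ifs with h1 h2
  · rw [show Ioo 1 c ∩ Iio x = ∅ by ext; simp; grind, Measure.restrict_empty, integral_zero_measure]
  · rw [show Ioo 1 c ∩ Iio x = Ioo 1 x by ext; simp; grind, integral_Ioo_one_inv (by linarith)]
  · rw [show Ioo 1 c ∩ Iio x = Ioo 1 c by ext; simp; grind, integral_Ioo_one_inv hc]

theorem integral_Ioc_one_indicator_Iio_inv_div_log {Rs : ℝ} (hRs : 0 < Rs) (x : ℝ) :
    (∫ z in Ioc 1 ((2:ℝ) ^ Rs), (Iio x).indicator (fun z => z⁻¹) z) / log ((2:ℝ) ^ Rs) =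
      if x ≤ 1 then 0 else if x < (2:ℝ) ^ Rs then logb 2 x / Rs else 1 := by
  have hc : 1 < (2:ℝ) ^ Rs := one_lt_rpow one_lt_two hRs
  rw [integral_Ioc_one_indicator_Iio_inv hc.le]
  split_ifs
  · exact zero_div _
  · rw [logb, log_rpow two_pos]
    field_simp
  · exact div_self (log_pos hc).ne'

theorem probReal_lt_eq_one_sub {Ω : Type*} [MeasurableSpace Ω] (P : Measure Ω)
    [IsProbabilityMeasure P] {X : Ω → ℝ} (hX : Measurable X) (z : ℝ) :
    P.real {ω | z < X ω} = 1 - P.real {ω | X ω ≤ z} := by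
  rw [← probReal_compl_eq_one_sub (measurableSet_le hX measurable_const)]
  congr 1
  ext ω
  simp

theorem integral_Ioc_probReal_lt_mul_inv {Ω : Type*} [MeasurableSpace Ω] (P : Measure Ω)
    [IsProbabilityMeasure P] {X : Ω → ℝ} (hX : Measurable X) {a b : ℝ} (ha : 0 < a)
    (hab : a ≤ b) :
    ∫ z in Ioc a b, P.real {ω | z < X ω} * z⁻¹ =
      log (b / a) - ∫ z in a..b, P.real {ω | X ω ≤ z} / z := by
  have hne : ∀ z ∈ uIcc a b, z ≠ 0 := fun z hz => (ha.trans_le (uIcc_of_le hab ▸ hz).1).ne'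
  have hinv : IntervalIntegrable (fun z => z⁻¹) volume a b :=
    intervalIntegral.intervalIntegrable_inv hne continuousOn_id
  have hcdf : IntervalIntegrable (fun z => P.real {ω | X ω ≤ z} / z) volume a b := by
    have hmono : Monotone fun z => P.real {ω | X ω ≤ z} :=
      fun s t hst => measureReal_mono fun ω (h : X ω ≤ s) => h.trans hst
    simpa only [div_eq_mul_inv] using
      hmono.intervalIntegrable.mul_continuousOn (continuousOn_inv₀.mono hne)
  rw [← integral_inv_of_pos ha (ha.trans_le hab), ← intervalIntegral.integral_sub hinv hcdf,
    intervalIntegral.integral_of_le hab]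
  refine integral_congr_ae (ae_of_all _ fun z => ?_)
  simp only [probReal_lt_eq_one_sub P hX]
  ring

/-- Proposition 4: the average fractional equivocation satisfies
`E[Λ] = 1 - (1/log(2^Rs)) ∫_1^{2^Rs} F_Φ(z)/z dz`. -/
theorem stmt3 {Ω : Type*} [MeasurableSpace Ω] (P : Measure Ω) [IsProbabilityMeasure P]
    (Φ : Ω → ℝ) (hΦ : Measurable Φ) (Rs : ℝ) (hRs : 0 < Rs)
    (Λ : Ω → ℝ)
    (hΛ : ∀ ω, Λ ω = if Φ ω ≤ 1 then 0
      else if Φ ω < (2:ℝ) ^ Rs then Real.logb 2 (Φ ω) / Rs else 1) :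
    ∫ ω, Λ ω ∂P = 1 - (1 / Real.log ((2:ℝ) ^ Rs)) *
      ∫ z in (1:ℝ)..((2:ℝ) ^ Rs), (P {ω | Φ ω ≤ z}).toReal / z := by
  have hc : 1 < (2:ℝ) ^ Rs := one_lt_rpow one_lt_two hRs
  have hinv : IntegrableOn (fun z => z⁻¹) (Ioc 1 ((2:ℝ) ^ Rs)) :=
    (intervalIntegral.intervalIntegrable_inv (fun z hz => by grind [uIcc_of_le hc.le])
      continuousOn_id).1
  simp_rw [hΛ, ← integral_Ioc_one_indicator_Iio_inv_div_log hRs]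
  rw [integral_div, integral_integral_indicator_Iio P _ hΦ hinv,
    integral_Ioc_probReal_lt_mul_inv P hΦ one_pos hc.le, div_one]
  field_simp [(log_pos hc).ne']
  rfl
end

section
/- Let (Ω, 𝔽, P) be a probability space, Φ : Ω → ℝ a random variable, and R_s > 0. Define the fractional equivocation Λ : Ω → ℝ by Λ(ω) = 0 if Φ(ω) ≤ 1, Λ(ω) = log₂(Φ(ω))/R_s if 1 < Φ(ω) < 2^{R_s}, and Λ(ω) = 1 if Φ(ω) ≥ 2^{R_s}. Then the average information leakage rate R_L := (1 − E[Λ]) · R_s satisfies R_L = (1/log 2) · ∫_1^{2^{R_s}} F_Φ(z)/z dz, where F_Φ(z) = P(Φ ≤ z) is the CDF of Φ and log denotes the natural logarithm. -/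
/-!
Clamping `Φ` to `[1, 2^Rs]` turns the fractional equivocation into `Λ = log₂ (clamp Φ) / Rs`, so
`(1 - Λ) Rs log 2 = log 2^Rs - log (clamp Φ) = ∫_1^{2^Rs} 1{Φ ≤ z} / z dz` pointwise. Taking
expectations and exchanging the two integrals (the integrand is dominated by `1/z` on a bounded
interval) turns `P(Φ ≤ z)` into the CDF under the `dz` integral.
-/

open MeasureTheory Set

-- The lower limit is clamped into `[a, b]`: for `x > b` the oriented integral `∫ x..b` is not `0`.
theorem intervalIntegral_indicator_Ici {μ : Measure ℝ} [NullSingletonClass μ] {g : ℝ → ℝ}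
    {a b : ℝ} (hab : a ≤ b) (x : ℝ) :
    ∫ z in a..b, (Ici x).indicator g z ∂μ = ∫ z in max a (min x b)..b, g z ∂μ := by
  have hIoc : Ioc (max a x) b = Ioc (max a (min x b)) b := by
    ext z
    simp only [mem_Ioc, max_lt_iff, min_lt_iff]
    constructor
    · rintro ⟨⟨ha, hx⟩, hb⟩
      exact ⟨⟨ha, .inl hx⟩, hb⟩
    · rintro ⟨⟨ha, hx | hb'⟩, hb⟩
      · exact ⟨⟨ha, hx⟩, hb⟩
      · exact absurd hb (not_le.2 hb')
  have hsets : (Ioc a b ∩ Ici x : Set ℝ) =ᵐ[μ] Ioc (max a (min x b)) b := by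
    rw [← hIoc, ← Ioc_inter_Ioi]
    exact (Filter.EventuallyEq.refl _ _).inter Ioi_ae_eq_Ici.symm
  rw [intervalIntegral.integral_of_le hab, setIntegral_indicator measurableSet_Ici,
    setIntegral_congr_set hsets,
    ← intervalIntegral.integral_of_le (max_le hab (min_le_right _ _))]

theorem intervalIntegral_indicator_Ici_inv {a b : ℝ} (ha : 0 < a) (hab : a ≤ b) (x : ℝ) :
    ∫ z in a..b, (Ici x).indicator (fun z => z⁻¹) z =
      Real.log b - Real.log (max a (min x b)) := by
  have hc : 0 < max a (min x b) := lt_max_of_lt_left ha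
  have hcb : max a (min x b) ≤ b := max_le hab (min_le_right _ _)
  have h0 : (0 : ℝ) ∉ uIcc (max a (min x b)) b := by
    rw [uIcc_of_le hcb]
    exact fun h => hc.not_ge h.1
  rw [intervalIntegral_indicator_Ici hab, integral_inv h0, Real.log_div (by linarith) hc.ne']

theorem integral_intervalIntegral_indicator_Ici {Ω : Type*} [MeasurableSpace Ω] {P : Measure Ω}
    [IsFiniteMeasure P] {X : Ω → ℝ} (hX : Measurable X) {g : ℝ → ℝ} {a b : ℝ}
    (hg : IntervalIntegrable g volume a b) :
    ∫ ω, (∫ z in a..b, (Ici (X ω)).indicator g z) ∂P =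
      ∫ z in a..b, P.real {ω | X ω ≤ z} * g z := by
  have hinner (z : ℝ) : ∫ ω, (Ici (X ω)).indicator g z ∂P = P.real {ω | X ω ≤ z} * g z := by
    have hind : (fun ω => (Ici (X ω)).indicator g z) = {ω | X ω ≤ z}.indicator fun _ => g z := by
      ext ω
      simp only [indicator_apply, mem_Ici, mem_ofPred_eq]
    rw [hind, integral_indicator_const _ (measurableSet_le hX measurable_const), smul_eq_mul]
  simp_rw [← hinner]
  refine (intervalIntegral_integral_swap ?_).symm
  rw [intervalIntegrable_iff] at hg
  refine (hg.comp_fst P).mono ?_ (ae_of_all _ fun p => norm_indicator_le_norm_self g p.1)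
  have hjoint : Function.uncurry (fun z ω => (Ici (X ω)).indicator g z) =
      {p : ℝ × Ω | X p.2 ≤ p.1}.indicator fun p => g p.1 := by
    ext ⟨z, ω⟩
    simp only [Function.uncurry_apply_pair, indicator_apply, mem_Ici, mem_ofPred_eq]
  rw [hjoint]
  exact hg.aestronglyMeasurable.comp_fst.indicator
    (measurableSet_le (hX.comp measurable_snd) measurable_fst)

theorem ite_logb_eq_logb_max_min {b s x : ℝ} (hb : 1 < b) (hs : 0 < s) :
    (if x ≤ 1 then 0 else if x < b ^ s then Real.logb b x / s else 1) =
      Real.logb b (max 1 (min x (b ^ s))) / s := by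
  have hbs : 1 ≤ b ^ s := Real.one_le_rpow hb.le hs.le
  split_ifs with h1 h2
  · rw [max_eq_left (min_le_of_left_le h1), Real.logb_one, zero_div]
  · rw [min_eq_left h2.le, max_eq_right (not_le.1 h1).le]
  · rw [min_eq_right (not_lt.1 h2), max_eq_right hbs, Real.logb_rpow (by linarith) hb.ne',
      div_self hs.ne']

/-- Corollary 1: the average information leakage rate satisfies
`R_L = (1 - E[Λ]) Rs = (1/log 2) ∫_1^{2^Rs} F_Φ(z)/z dz`. -/
theorem stmt4 {Ω : Type*} [MeasurableSpace Ω] (P : Measure Ω) [IsProbabilityMeasure P]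
    (Φ : Ω → ℝ) (hΦ : Measurable Φ) (Rs : ℝ) (hRs : 0 < Rs)
    (Λ : Ω → ℝ)
    (hΛ : ∀ ω, Λ ω = if Φ ω ≤ 1 then 0
      else if Φ ω < (2:ℝ) ^ Rs then Real.logb 2 (Φ ω) / Rs else 1) :
    (1 - ∫ ω, Λ ω ∂P) * Rs = (1 / Real.log 2) *
      ∫ z in (1:ℝ)..((2:ℝ) ^ Rs), (P {ω | Φ ω ≤ z}).toReal / z := by
  set T : ℝ := 2 ^ Rs
  have hT : 1 ≤ T := Real.one_le_rpow one_le_two hRs.le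
  have hΛ_log (ω : Ω) : Λ ω = Real.log (max 1 (min (Φ ω) T)) / (Rs * Real.log 2) := by
    rw [hΛ, ite_logb_eq_logb_max_min one_lt_two hRs, Real.logb, div_div, mul_comm]
  have hlog_int : Integrable (fun ω => Real.log (max 1 (min (Φ ω) T))) P := by
    refine .of_bound (by fun_prop : Measurable _).aestronglyMeasurable (Real.log T)
      (ae_of_all _ fun ω => ?_)
    have h1 : 1 ≤ max 1 (min (Φ ω) T) := le_max_left _ _
    rw [Real.norm_of_nonneg (Real.log_nonneg h1)]
    exact Real.log_le_log (by linarith) (max_le hT (min_le_right _ _))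
  have hcdf : ∫ z in (1:ℝ)..T, (P {ω | Φ ω ≤ z}).toReal / z =
      ∫ ω, (Real.log T - Real.log (max 1 (min (Φ ω) T))) ∂P := by
    have h0 : (0 : ℝ) ∉ uIcc 1 T := by
      rw [uIcc_of_le hT]
      exact fun h => zero_lt_one.not_ge h.1
    simp_rw [div_eq_mul_inv, ← measureReal_def,
      ← integral_intervalIntegral_indicator_Ici hΦ (intervalIntegrable_inv_iff.2 (.inr h0)),
      intervalIntegral_indicator_Ici_inv one_pos hT]
  rw [hcdf, integral_sub (integrable_const _) hlog_int, integral_congr_ae (ae_of_all _ hΛ_log),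
    integral_div, integral_const, Real.log_rpow two_pos]
  simp only [probReal_univ, one_smul]
  field_simp
end

section
/- Let a ∈ ℕ, ν > 0, ρ_B > 0, ρ_E > 0, and z ≥ 1. Then ∫_0^∞ y^{ν−1} · ((y+1)·z − 1)^a · exp(−y/ρ_E) · exp(−((y+1)·z − 1)/ρ_B) dy = exp(−(z−1)/ρ_B) · ∑_{k=0}^{a} C(a,k) · z^k · (z−1)^{a−k} · Γ(k+ν) · (ρ_B·ρ_E/(ρ_B + z·ρ_E))^{k+ν}, where C(a,k) is the binomial coefficient and Γ is the Gamma function. -/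
/-!
Since `(y + 1) z - 1 = z y + (z - 1)`, the two exponentials combine into
`exp (-(z - 1) / ρB) * exp (-(1 / ρE + z / ρB) y)`. Expanding the binomial then leaves a
sum of Gamma integrals `∫₀^∞ y ^ (s - 1) exp (-r y) dy = Γ(s) r ^ (-s)` with `s = k + ν` and
`1 / r = ρB ρE / (ρB + z ρE)`.
-/

open MeasureTheory Real Set Finset

lemma integrableOn_rpow_sub_one_mul_exp_neg_mul_Ioi {s r : ℝ} (hs : 0 < s) (hr : 0 < r) :
    IntegrableOn (fun t : ℝ => t ^ (s - 1) * exp (-(r * t))) (Ioi 0) :=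
  .of_integral_ne_zero (by rw [integral_rpow_mul_exp_neg_mul_Ioi hs hr]; positivity)

lemma rpow_sub_one_mul_add_pow_eq_sum {t : ℝ} (ht : 0 < t) (ν u v : ℝ) (a : ℕ) :
    t ^ (ν - 1) * (u * t + v) ^ a =
      ∑ k ∈ range (a + 1), (a.choose k : ℝ) * u ^ k * v ^ (a - k) * t ^ ((k + ν) - 1) := by
  rw [add_pow, mul_sum]
  refine sum_congr rfl fun k _ => ?_
  have hpow : t ^ ((k + ν) - 1) = t ^ (ν - 1) * t ^ k := by
    rw [← rpow_natCast, ← rpow_add ht]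
    ring_nf
  rw [hpow, mul_pow]
  ring

theorem integral_rpow_mul_add_pow_mul_exp_neg_mul_Ioi {ν r : ℝ} (hν : 0 < ν) (hr : 0 < r)
    (u v : ℝ) (a : ℕ) :
    ∫ t in Ioi 0, t ^ (ν - 1) * (u * t + v) ^ a * exp (-(r * t)) =
      ∑ k ∈ range (a + 1),
        (a.choose k : ℝ) * u ^ k * v ^ (a - k) * Gamma (k + ν) * (1 / r) ^ ((k : ℝ) + ν) := by
  have hpos : ∀ k : ℕ, 0 < (k : ℝ) + ν := fun k => by positivity
  calc ∫ t in Ioi 0, t ^ (ν - 1) * (u * t + v) ^ a * exp (-(r * t))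
      = ∫ t in Ioi 0, ∑ k ∈ range (a + 1), (a.choose k : ℝ) * u ^ k * v ^ (a - k) *
          (t ^ ((k + ν) - 1) * exp (-(r * t))) := by
        refine setIntegral_congr_fun measurableSet_Ioi fun t ht => ?_
        simp only [rpow_sub_one_mul_add_pow_eq_sum ht, sum_mul, mul_assoc]
    _ = ∑ k ∈ range (a + 1), (a.choose k : ℝ) * u ^ k * v ^ (a - k) *
          ∫ t in Ioi 0, t ^ ((k + ν) - 1) * exp (-(r * t)) := by
        rw [integral_finsetSum _ fun k _ =>
          (integrableOn_rpow_sub_one_mul_exp_neg_mul_Ioi (hpos k) hr).const_mul _]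
        simp only [integral_const_mul]
    _ = _ := by
        simp only [integral_rpow_mul_exp_neg_mul_Ioi (hpos _) hr]
        refine sum_congr rfl fun k _ => by ring

lemma exp_div_mul_exp_div_eq (ρB ρE y z : ℝ) :
    exp (-y / ρE) * exp (-((y + 1) * z - 1) / ρB) =
      exp (-(z - 1) / ρB) * exp (-((1 / ρE + z / ρB) * y)) := by
  rw [← exp_add, ← exp_add]
  ring_nf

/-- Evaluation of the integral `I₂` in Appendix A (Proposition 2). -/
theorem stmt8 (a : ℕ) (ν ρB ρE z : ℝ) (hν : 0 < ν) (hρB : 0 < ρB) (hρE : 0 < ρE)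
    (hz : 1 ≤ z) :
    ∫ y in Set.Ioi (0:ℝ),
        y ^ (ν - 1) * ((y + 1) * z - 1) ^ a * Real.exp (-y / ρE) *
          Real.exp (-((y + 1) * z - 1) / ρB) =
      Real.exp (-(z - 1) / ρB) *
        ∑ k ∈ Finset.range (a + 1),
          (a.choose k : ℝ) * z ^ k * (z - 1) ^ (a - k) * Real.Gamma ((k : ℝ) + ν) *
            (ρB * ρE / (ρB + z * ρE)) ^ ((k : ℝ) + ν) := by
  have hz0 : 0 < z := by linarith
  have hr : 0 < 1 / ρE + z / ρB := by positivity
  have hrate : 1 / (1 / ρE + z / ρB) = ρB * ρE / (ρB + z * ρE) := by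
    field_simp
  calc _ = ∫ y in Ioi 0, exp (-(z - 1) / ρB) *
          (y ^ (ν - 1) * (z * y + (z - 1)) ^ a * exp (-((1 / ρE + z / ρB) * y))) := by
        congr 1 with y
        rw [mul_assoc _ (exp _), exp_div_mul_exp_div_eq]
        ring
    _ = _ := by
        rw [integral_const_mul, integral_rpow_mul_add_pow_mul_exp_neg_mul_Ioi hν hr, hrate]
end

section
/- Let n be a positive natural number, ν > 0, ρ_B > 0, ρ_E > 0. Let X and Y be independent random variables where X has the Gamma distribution with shape n and scale ρ_B (density x ↦ x^{n−1} ρ_B^{−n} e^{−x/ρ_B}/Γ(n) on (0,∞)) and Y has the Gamma distribution with shape ν and scale ρ_E (density y ↦ y^{ν−1} ρ_E^{−ν} e^{−y/ρ_E}/Γ(ν) on (0,∞)). Then for every z > 0, P(X/Y ≤ z) = 1 − (ρ_B^ν / Γ(ν)) · ∑_{a=0}^{n−1} (z·ρ_E)^a · Γ(a+ν) / (a! · (ρ_B + z·ρ_E)^{a+ν}). -/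
/-!
The law Gamma(`k`, scale `ρ`) is Mathlib's `gammaMeasure k ρ⁻¹`. For integer shape `n` its
survival function is the Erlang tail `P(X > t) = e^{-t/ρ} ∑_{a<n} (t/ρ)^a / a!`, by the
fundamental theorem of calculus: the derivative of this tail is minus the density.
Since `Y > 0` almost surely, `{X / Y ≤ z}` is a.s. the complement of `{z Y < X}`, and by
independence `P(z Y < X) = E[P(X > z y)|_{y = Y}]`, which is a finite sum of Gamma integrals
`E[Y^a e^{-bY}] = r^ν Γ(a + ν) / (Γ(ν) (r + b)^{a + ν})` for `Y ~ gammaMeasure ν r`.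
-/

open MeasureTheory

/-- The Gamma(shape `k`, scale `ρ`) density on `(0,∞)`. -/
noncomputable def gammaScaleDensity (k ρ x : ℝ) : ℝ :=
  if 0 < x then x ^ (k - 1) * ρ ^ (-k) * Real.exp (-x / ρ) / Real.Gamma k else 0

open ProbabilityTheory Real Set Filter Topology
open scoped ENNReal Nat

noncomputable def erlangSurvival (n : ℕ) (t : ℝ) : ℝ :=
  exp (-t) * ∑ a ∈ Finset.range n, t ^ a / a !

theorem hasDerivAt_sum_pow_div_factorial (m : ℕ) (t : ℝ) :
    HasDerivAt (fun t : ℝ => ∑ a ∈ Finset.range (m + 1), t ^ a / a !)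
      (∑ a ∈ Finset.range m, t ^ a / a !) t := by
  induction m with
  | zero => simpa using hasDerivAt_const t (1 : ℝ)
  | succ m ih =>
    simp_rw [Finset.sum_range_succ _ (m + 1)]
    refine (ih.add ((hasDerivAt_pow (m + 1) t).div_const ((m + 1)! : ℝ))).congr_deriv ?_
    rw [Finset.sum_range_succ, Nat.factorial_succ]
    push_cast
    field_simp

theorem hasDerivAt_erlangSurvival (m : ℕ) (t : ℝ) :
    HasDerivAt (erlangSurvival (m + 1)) (-(exp (-t) * t ^ m / m !)) t := by
  unfold erlangSurvival
  refine ((hasDerivAt_neg t).exp.mul (hasDerivAt_sum_pow_div_factorial m t)).congr_deriv ?_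
  rw [Finset.sum_range_succ]
  ring

theorem erlangSurvival_nonneg (n : ℕ) {t : ℝ} (ht : 0 ≤ t) : 0 ≤ erlangSurvival n t :=
  mul_nonneg (exp_nonneg _) (Finset.sum_nonneg fun _ _ => by positivity)

theorem tendsto_erlangSurvival_atTop (n : ℕ) :
    Tendsto (erlangSurvival n) atTop (𝓝 0) := by
  have h := tendsto_finsetSum (Finset.range n) fun a _ =>
    (tendsto_pow_mul_exp_neg_atTop_nhds_zero a).div_const (a ! : ℝ)
  simp only [zero_div, Finset.sum_const_zero] at h
  refine h.congr fun t => ?_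
  rw [erlangSurvival, Finset.mul_sum]
  exact Finset.sum_congr rfl fun a _ => by ring

theorem erlangSurvival_mul (n : ℕ) (b y : ℝ) :
    erlangSurvival n (b * y) =
      ∑ a ∈ Finset.range n, b ^ a / a ! * (y ^ (a : ℝ) * exp (-(b * y))) := by
  rw [erlangSurvival, Finset.mul_sum]
  refine Finset.sum_congr rfl fun a _ => ?_
  rw [rpow_natCast, mul_pow]
  ring

theorem gammaPDFReal_natCast_succ (m : ℕ) (r : ℝ) {x : ℝ} (hx : 0 ≤ x) :
    gammaPDFReal (m + 1 : ℕ) r x = r * (exp (-(r * x)) * (r * x) ^ m / m !) := by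
  rw [gammaPDFReal, if_pos hx, rpow_natCast, Nat.cast_succ, add_sub_cancel_right, rpow_natCast,
    Gamma_nat_eq_factorial]
  ring

theorem measurable_gammaPDF {a r : ℝ} : Measurable (gammaPDF a r) :=
  (measurable_gammaPDFReal a r).ennreal_ofReal

theorem gammaPDFReal_of_neg {a r x : ℝ} (hx : x < 0) : gammaPDFReal a r x = 0 :=
  if_neg hx.not_ge

theorem gammaMeasure_Ioi {n : ℕ} (hn : 0 < n) {r t : ℝ} (hr : 0 < r) (ht : 0 ≤ t) :
    gammaMeasure n r (Ioi t) = ENNReal.ofReal (erlangSurvival n (r * t)) := by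
  obtain ⟨m, rfl⟩ := Nat.exists_eq_add_one.2 hn
  have hderiv : ∀ x ∈ Ici t, HasDerivAt (fun x => -erlangSurvival (m + 1) (r * x))
      (gammaPDFReal (m + 1 : ℕ) r x) x := fun x hx => by
    rw [gammaPDFReal_natCast_succ m r (ht.trans hx)]
    refine ((hasDerivAt_erlangSurvival m (r * x)).comp x
      ((hasDerivAt_id x).const_mul r)).neg.congr_deriv ?_
    simp only [mul_one]
    ring
  have hnonneg : ∀ x ∈ Ioi t, 0 ≤ gammaPDFReal (m + 1 : ℕ) r x :=
    fun x _ => gammaPDFReal_nonneg (by positivity) hr x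
  have hlim : Tendsto (fun x => -erlangSurvival (m + 1) (r * x)) atTop (𝓝 0) := by
    simpa using ((tendsto_erlangSurvival_atTop _).comp (tendsto_id.const_mul_atTop hr)).neg
  simp only [gammaMeasure, withDensity_apply _ measurableSet_Ioi, gammaPDF]
  rw [← ofReal_integral_eq_lintegral_ofReal
      (integrableOn_Ioi_deriv_of_nonneg' hderiv hnonneg hlim)
      ((ae_restrict_iff' measurableSet_Ioi).2 (ae_of_all _ hnonneg)),
    integral_Ioi_of_hasDerivAt_of_nonneg' hderiv hnonneg hlim, zero_sub, neg_neg]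

theorem withDensity_gammaScaleDensity (k : ℝ) {ρ : ℝ} (hρ : 0 < ρ) :
    volume.withDensity (fun x => ENNReal.ofReal (gammaScaleDensity k ρ x)) =
      gammaMeasure k ρ⁻¹ := by
  refine withDensity_congr_ae ?_
  filter_upwards [volume.ae_ne 0] with x hx
  rw [gammaPDF, gammaPDFReal, gammaScaleDensity]
  rcases hx.lt_or_gt with hneg | hpos
  · rw [if_neg hneg.not_gt, if_neg hneg.not_ge]
  · rw [if_pos hpos, if_pos hpos.le, inv_rpow hρ.le, rpow_neg hρ.le, neg_div, div_eq_inv_mul x]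
    ring_nf

theorem ae_pos_gammaMeasure (a r : ℝ) : ∀ᵐ y ∂gammaMeasure a r, 0 < y := by
  rw [gammaMeasure, ae_withDensity_iff measurable_gammaPDF]
  filter_upwards [volume.ae_ne 0] with y hy hpdf
  exact lt_of_le_of_ne (not_lt.1 fun h => hpdf (gammaPDF_of_neg h)) hy.symm

theorem integral_gammaMeasure {a r : ℝ} (ha : 0 < a) (hr : 0 < r) (g : ℝ → ℝ) :
    ∫ y, g y ∂gammaMeasure a r = ∫ y in Ioi 0, gammaPDFReal a r y * g y := by
  have hzero : ∀ y ∉ Ici 0, gammaPDFReal a r y * g y = 0 := fun y hy => by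
    rw [gammaPDFReal_of_neg (not_le.1 hy), zero_mul]
  rw [gammaMeasure, integral_withDensity_eq_integral_toReal_smul
      measurable_gammaPDF (ae_of_all _ fun _ => ENNReal.ofReal_lt_top)]
  simp_rw [gammaPDF, ENNReal.toReal_ofReal (gammaPDFReal_nonneg ha hr _), smul_eq_mul]
  rw [← setIntegral_eq_integral_of_forall_compl_eq_zero hzero, integral_Ici_eq_integral_Ioi]

theorem integrable_gammaMeasure_iff {a r : ℝ} (ha : 0 < a) (hr : 0 < r) {g : ℝ → ℝ} :
    Integrable g (gammaMeasure a r) ↔ IntegrableOn (fun y => gammaPDFReal a r y * g y) (Ioi 0) := by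
  have hsupp : Function.support (fun y => gammaPDFReal a r y * g y) ⊆ Ici 0 :=
    Function.support_subset_iff'.2 fun y hy => by rw [gammaPDFReal_of_neg (not_le.1 hy), zero_mul]
  rw [gammaMeasure, integrable_withDensity_iff_integrable_smul'
      measurable_gammaPDF (ae_of_all _ fun _ => ENNReal.ofReal_lt_top)]
  simp_rw [gammaPDF, ENNReal.toReal_ofReal (gammaPDFReal_nonneg ha hr _), smul_eq_mul]
  rw [← integrableOn_Ici_iff_integrableOn_Ioi, integrableOn_iff_integrable_of_support_subset hsupp]

theorem gammaPDFReal_mul_rpow_mul_exp (a r p b : ℝ) {y : ℝ} (hy : 0 < y) :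
    gammaPDFReal a r y * (y ^ p * exp (-(b * y))) =
      r ^ a / Gamma a * (y ^ (p + a - 1) * exp (-((r + b) * y))) := by
  rw [gammaPDFReal, if_pos hy.le, add_sub_assoc, rpow_add hy, add_mul, neg_add, exp_add]
  ring

theorem integrable_rpow_mul_exp_gammaMeasure {a r p b : ℝ} (ha : 0 < a) (hr : 0 < r)
    (hp : 0 < p + a) (hb : 0 < r + b) :
    Integrable (fun y => y ^ p * exp (-(b * y))) (gammaMeasure a r) := by
  have hI : IntegrableOn (fun y => y ^ (p + a - 1) * exp (-((r + b) * y))) (Ioi 0) :=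
    Integrable.of_integral_ne_zero (by rw [integral_rpow_mul_exp_neg_mul_Ioi hp hb]; positivity)
  rw [integrable_gammaMeasure_iff ha hr]
  exact IntegrableOn.congr_fun (hI.const_mul _)
    (fun y hy => (gammaPDFReal_mul_rpow_mul_exp a r p b hy).symm) measurableSet_Ioi

theorem integral_rpow_mul_exp_gammaMeasure {a r p b : ℝ} (ha : 0 < a) (hr : 0 < r)
    (hp : 0 < p + a) (hb : 0 < r + b) :
    ∫ y, y ^ p * exp (-(b * y)) ∂gammaMeasure a r =
      r ^ a * Gamma (p + a) / (Gamma a * (r + b) ^ (p + a)) := by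
  rw [integral_gammaMeasure ha hr, setIntegral_congr_fun measurableSet_Ioi
      (fun y hy => gammaPDFReal_mul_rpow_mul_exp a r p b hy), integral_const_mul,
    integral_rpow_mul_exp_neg_mul_Ioi hp hb, one_div, inv_rpow hb.le]
  field_simp

theorem lintegral_erlangSurvival_gammaMeasure (n : ℕ) {a r b : ℝ} (ha : 0 < a) (hr : 0 < r)
    (hb : 0 ≤ b) :
    ∫⁻ y, ENNReal.ofReal (erlangSurvival n (b * y)) ∂gammaMeasure a r =
      ENNReal.ofReal (∑ i ∈ Finset.range n, b ^ i / i ! *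
        (r ^ a * Gamma (i + a) / (Gamma a * (r + b) ^ ((i : ℝ) + a)))) := by
  have hterm : ∀ i ∈ Finset.range n,
      Integrable (fun y => b ^ i / i ! * (y ^ (i : ℝ) * exp (-(b * y)))) (gammaMeasure a r) :=
    fun i _ =>
      (integrable_rpow_mul_exp_gammaMeasure ha hr (by positivity) (by linarith)).const_mul _
  have hsum : (fun y => erlangSurvival n (b * y)) =
      fun y => ∑ i ∈ Finset.range n, b ^ i / i ! * (y ^ (i : ℝ) * exp (-(b * y))) :=
    funext (erlangSurvival_mul n b)
  have hnonneg : 0 ≤ᵐ[gammaMeasure a r] fun y => erlangSurvival n (b * y) :=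
    (ae_pos_gammaMeasure a r).mono fun y hy => erlangSurvival_nonneg n (by positivity)
  rw [← ofReal_integral_eq_lintegral_ofReal (hsum ▸ integrable_finsetSum _ hterm) hnonneg, hsum,
    integral_finsetSum _ hterm]
  refine congrArg ENNReal.ofReal (Finset.sum_congr rfl fun i _ => ?_)
  rw [integral_const_mul, integral_rpow_mul_exp_gammaMeasure ha hr (by positivity) (by linarith)]

theorem lintegral_gammaMeasure_Ioi_mul {n : ℕ} (hn : 0 < n) {a r s c : ℝ} (ha : 0 < a)
    (hr : 0 < r) (hs : 0 < s) (hc : 0 ≤ c) :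
    ∫⁻ y, gammaMeasure n r (Ioi (c * y)) ∂gammaMeasure a s =
      ENNReal.ofReal (∑ i ∈ Finset.range n, (c * r) ^ i / i ! *
        (s ^ a * Gamma (i + a) / (Gamma a * (s + c * r) ^ ((i : ℝ) + a)))) := by
  rw [← lintegral_erlangSurvival_gammaMeasure n ha hs (by positivity)]
  refine lintegral_congr_ae ((ae_pos_gammaMeasure a s).mono fun y hy => ?_)
  dsimp only
  rw [gammaMeasure_Ioi hn hr (by positivity), mul_left_comm, mul_assoc]

theorem ProbabilityTheory.IndepFun.measure_mem_eq_lintegral {Ω α β : Type*} [MeasurableSpace Ω]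
    [MeasurableSpace α] [MeasurableSpace β] {P : Measure Ω} [IsFiniteMeasure P] {X : Ω → α}
    {Y : Ω → β} (hX : AEMeasurable X P) (hY : AEMeasurable Y P) (h : IndepFun X Y P)
    {s : Set (α × β)} (hs : MeasurableSet s) :
    P {ω | (X ω, Y ω) ∈ s} = ∫⁻ x, P.map Y (Prod.mk x ⁻¹' s) ∂P.map X := by
  rw [show {ω | (X ω, Y ω) ∈ s} = (fun ω => (X ω, Y ω)) ⁻¹' s from rfl,
    ← Measure.map_apply_of_aemeasurable (hX.prodMk hY) hs,
    (indepFun_iff_map_prod_eq_prod_map_map hX hY).1 h, Measure.prod_apply hs]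

theorem sum_rate_form_eq_scale_form (n : ℕ) {ν ρB ρE z : ℝ} (hρB : 0 < ρB) (hρE : 0 < ρE)
    (hz : 0 ≤ z) :
    ∑ i ∈ Finset.range n, (z * ρB⁻¹) ^ i / i ! *
        (ρE⁻¹ ^ ν * Gamma (i + ν) / (Gamma ν * (ρE⁻¹ + z * ρB⁻¹) ^ ((i : ℝ) + ν))) =
      ρB ^ ν / Gamma ν * ∑ i ∈ Finset.range n,
        (z * ρE) ^ i * Gamma (i + ν) / (i ! * (ρB + z * ρE) ^ ((i : ℝ) + ν)) := by
  rw [Finset.mul_sum]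
  refine Finset.sum_congr rfl fun i _ => ?_
  have hsum : ρE⁻¹ + z * ρB⁻¹ = (ρB + z * ρE) * (ρE⁻¹ * ρB⁻¹) := by field_simp
  have hpos : 0 < ρB + z * ρE := by positivity
  rw [hsum, mul_rpow hpos.le (by positivity), mul_rpow (by positivity) (by positivity)]
  simp only [inv_rpow hρE.le, inv_rpow hρB.le, rpow_add hρE, rpow_add hρB, rpow_natCast, mul_pow,
    inv_pow]
  field_simp

/-- Single-term instance of Proposition 5: closed-form CDF of `Φ_A = X/Y` for
independent Gamma-distributed `X` (integer shape `n`, scale `ρB`) and `Y`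
(shape `ν`, scale `ρE`). -/
theorem stmt14 {Ω : Type*} [MeasurableSpace Ω] (P : Measure Ω) [IsProbabilityMeasure P]
    (n : ℕ) (hn : 0 < n) (ν ρB ρE : ℝ) (hν : 0 < ν) (hρB : 0 < ρB) (hρE : 0 < ρE)
    (X Y : Ω → ℝ) (hX : Measurable X) (hY : Measurable Y)
    (hind : ProbabilityTheory.IndepFun X Y P)
    (hXlaw : Measure.map X P =
      volume.withDensity (fun x => ENNReal.ofReal (gammaScaleDensity n ρB x)))
    (hYlaw : Measure.map Y P =
      volume.withDensity (fun y => ENNReal.ofReal (gammaScaleDensity ν ρE y))) :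
    ∀ z : ℝ, 0 < z → (P {ω | X ω / Y ω ≤ z}).toReal =
      1 - (ρB ^ ν / Real.Gamma ν) * ∑ a ∈ Finset.range n,
        (z * ρE) ^ a * Real.Gamma ((a : ℝ) + ν) /
          ((a.factorial : ℝ) * (ρB + z * ρE) ^ ((a : ℝ) + ν)) := by
  intro z hz
  have hμX : P.map X = gammaMeasure n ρB⁻¹ := hXlaw.trans (withDensity_gammaScaleDensity n hρB)
  have hμY : P.map Y = gammaMeasure ν ρE⁻¹ := hYlaw.trans (withDensity_gammaScaleDensity ν hρE)
  have hYpos : ∀ᵐ ω ∂P, 0 < Y ω :=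
    ae_of_ae_map hY.aemeasurable (hμY ▸ ae_pos_gammaMeasure ν ρE⁻¹)
  have hcompl : {ω | X ω / Y ω ≤ z} =ᵐ[P] ({ω | z * Y ω < X ω}ᶜ : Set Ω) := by
    refine eventuallyEq_set.2 (hYpos.mono fun ω hω => ?_)
    simp only [mem_compl_iff, mem_ofPred_eq, not_lt, div_le_iff₀ hω]
  have hlt : P {ω | z * Y ω < X ω} =
      ∫⁻ y, gammaMeasure n ρB⁻¹ (Ioi (z * y)) ∂gammaMeasure ν ρE⁻¹ := by
    rw [← hμX, ← hμY]
    exact hind.symm.measure_mem_eq_lintegral hY.aemeasurable hX.aemeasurable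
      (s := {p | z * p.1 < p.2}) (measurableSet_lt (by fun_prop) (by fun_prop))
  rw [lintegral_gammaMeasure_Ioi_mul hn hν (inv_pos.2 hρB) (inv_pos.2 hρE) hz.le,
    sum_rate_form_eq_scale_form n hρB hρE hz.le] at hlt
  rw [← measureReal_def, measureReal_congr hcompl,
    probReal_compl_eq_one_sub (measurableSet_lt (by fun_prop) hX), measureReal_def, hlt,
    ENNReal.toReal_ofReal (by positivity)]
end

section
/- Let n be a positive natural number, ν > 0, ρ_B > 0, ρ_E > 0. Let X and Y be independent random variables where X has the Gamma distribution with shape n and scale ρ_B (density x ↦ x^{n−1} ρ_B^{−n} e^{−x/ρ_B}/Γ(n) on (0,∞)) and Y has the Gamma distribution with shape ν and scale ρ_E (density y ↦ y^{ν−1} ρ_E^{−ν} e^{−y/ρ_E}/Γ(ν) on (0,∞)). Then for every z ≥ 1, P((1+X)/(1+Y) ≤ z) = 1 − exp(−(z−1)/ρ_B) · ∑_{a=0}^{n−1} (1/(a! · ρ_B^a · Γ(ν))) · ∑_{k=0}^{a} C(a,k) · z^k · (z−1)^{a−k} · Γ(k+ν) · ρ_B^{k+ν} · ρ_E^{k}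 · (ρ_B + z·ρ_E)^{−(k+ν)}, where C(a,k) is the binomial coefficient. -/
open MeasureTheory

/-! Since `Y > 0` almost surely, `(1 + X) / (1 + Y) ≤ z` iff `X ≤ (z - 1) + z Y`, so by
independence the probability is `∫ F_X((z - 1) + z y) f_Y(y) dy`. For integer shape `n` the
Gamma CDF is `1 - e^{-t/ρ} ∑_{a<n} (t/ρ)^a / a!`: the derivative of the tail telescopes to minus
the density. Expanding `((z - 1) + z y)^a` binomially turns each term into a Gamma integral
`∫ y^{k+ν-1} e^{-l y} dy = Γ(k+ν) l^{-(k+ν)}` with `l = 1/ρE + z/ρB`. -/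

open Real Set ProbabilityTheory
open scoped Nat

noncomputable def erlangTail (n : ℕ) (ρ t : ℝ) : ℝ :=
  exp (-t / ρ) * ∑ a ∈ Finset.range n, (t / ρ) ^ a / a !

lemma erlangTail_succ (n : ℕ) (ρ t : ℝ) :
    erlangTail (n + 1) ρ t = erlangTail n ρ t + exp (-t / ρ) * ((t / ρ) ^ n / n !) := by
  rw [erlangTail, erlangTail, Finset.sum_range_succ, mul_add]

lemma erlangTail_succ_zero (n : ℕ) (ρ : ℝ) : erlangTail (n + 1) ρ 0 = 1 := by
  simp [erlangTail, Finset.sum_range_succ']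

lemma erlangTail_le_one (n : ℕ) {ρ t : ℝ} (hρ : 0 < ρ) (ht : 0 ≤ t) :
    erlangTail n ρ t ≤ 1 := by
  calc erlangTail n ρ t ≤ exp (-t / ρ) * exp (t / ρ) := by
        unfold erlangTail; gcongr; exact sum_le_exp_of_nonneg (by positivity) n
    _ = 1 := by rw [← exp_add, neg_div, neg_add_cancel, exp_zero]

lemma hasDerivAt_exp_neg_div (ρ t : ℝ) :
    HasDerivAt (fun t => exp (-t / ρ)) (-(exp (-t / ρ) / ρ)) t :=
  (((hasDerivAt_neg t).div_const ρ).exp).congr_deriv (by ring)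

theorem hasDerivAt_erlangTail_succ (n : ℕ) {ρ : ℝ} (hρ : ρ ≠ 0) (t : ℝ) :
    HasDerivAt (erlangTail (n + 1) ρ) (-((t / ρ) ^ n / n ! * exp (-t / ρ) / ρ)) t := by
  induction n with
  | zero =>
    have h : erlangTail 1 ρ = fun t => exp (-t / ρ) := by
      funext t; simp [erlangTail]
    simpa [h] using hasDerivAt_exp_neg_div ρ t
  | succ n ih =>
    have hterm : HasDerivAt (fun t => exp (-t / ρ) * ((t / ρ) ^ (n + 1) / (n + 1)!))
        (-(exp (-t / ρ) / ρ) * ((t / ρ) ^ (n + 1) / (n + 1)!) +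
          exp (-t / ρ) * ((n + 1 : ℕ) * (t / ρ) ^ n * (1 / ρ) / (n + 1)!)) t :=
      (hasDerivAt_exp_neg_div ρ t).mul
        (((hasDerivAt_id t).div_const ρ).pow (n + 1) |>.div_const _)
    rw [show erlangTail (n + 2) ρ = fun t => erlangTail (n + 1) ρ t +
        exp (-t / ρ) * ((t / ρ) ^ (n + 1) / (n + 1)!) from funext (erlangTail_succ (n + 1) ρ)]
    refine (ih.fun_add hterm).congr_deriv ?_
    rw [Nat.factorial_succ]
    push_cast
    field_simp
    ring

lemma gammaScaleDensity_of_nonpos (k ρ : ℝ) {x : ℝ} (hx : x ≤ 0) :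
    gammaScaleDensity k ρ x = 0 :=
  if_neg hx.not_gt

lemma gammaScaleDensity_nonneg {k ρ : ℝ} (hk : 0 < k) (hρ : 0 < ρ) (x : ℝ) :
    0 ≤ gammaScaleDensity k ρ x := by
  unfold gammaScaleDensity
  split_ifs with hx
  · have := Gamma_pos_of_pos hk
    positivity
  · exact le_rfl

lemma measurable_gammaScaleDensity (k ρ : ℝ) : Measurable (gammaScaleDensity k ρ) :=
  Measurable.ite measurableSet_Ioi (by fun_prop) measurable_const

lemma gammaScaleDensity_natCast_succ (n : ℕ) {ρ x : ℝ} (hρ : 0 < ρ) (hx : 0 < x) :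
    gammaScaleDensity ((n + 1 : ℕ) : ℝ) ρ x = (x / ρ) ^ n / n ! * exp (-x / ρ) / ρ := by
  rw [gammaScaleDensity, if_pos hx, Nat.cast_succ, Gamma_nat_eq_factorial, add_sub_cancel_right,
    rpow_natCast, ← Nat.cast_succ, rpow_neg hρ.le, rpow_natCast, div_pow, pow_succ]
  field_simp

lemma withDensity_gammaScaleDensity_Iic_zero (k ρ : ℝ) :
    volume.withDensity (fun x => ENNReal.ofReal (gammaScaleDensity k ρ x)) (Iic 0) = 0 := by
  rw [withDensity_apply _ measurableSet_Iic, setLIntegral_congr_fun (g := fun _ => 0)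
    measurableSet_Iic fun x hx => by
      rw [gammaScaleDensity_of_nonpos k ρ hx, ENNReal.ofReal_zero], lintegral_zero]

lemma integral_Ioc_gammaScaleDensity_natCast_succ (n : ℕ) {ρ t : ℝ} (hρ : 0 < ρ)
    (ht : 0 ≤ t) :
    IntegrableOn (gammaScaleDensity ((n + 1 : ℕ) : ℝ) ρ) (Ioc 0 t) ∧
      ∫ x in Ioc 0 t, gammaScaleDensity ((n + 1 : ℕ) : ℝ) ρ x =
        1 - erlangTail (n + 1) ρ t := by
  have hdens : EqOn (gammaScaleDensity ((n + 1 : ℕ) : ℝ) ρ)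
      (fun x => (x / ρ) ^ n / n ! * exp (-x / ρ) / ρ) (Ioc 0 t) :=
    fun x hx => gammaScaleDensity_natCast_succ n hρ hx.1
  have hcont : Continuous fun x : ℝ => (x / ρ) ^ n / n ! * exp (-x / ρ) / ρ := by fun_prop
  refine ⟨hcont.integrableOn_Ioc.congr_fun hdens.symm measurableSet_Ioc, ?_⟩
  rw [setIntegral_congr_fun measurableSet_Ioc hdens, ← intervalIntegral.integral_of_le ht,
    intervalIntegral.integral_eq_sub_of_hasDerivAt
      (fun x _ => (hasDerivAt_erlangTail_succ n hρ.ne' x).neg.congr_deriv (neg_neg _))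
      (hcont.intervalIntegrable 0 t), Pi.neg_apply, Pi.neg_apply, erlangTail_succ_zero]
  ring

theorem withDensity_gammaScaleDensity_natCast_succ_Iic (n : ℕ) {ρ t : ℝ} (hρ : 0 < ρ)
    (ht : 0 ≤ t) :
    volume.withDensity (fun x => ENNReal.ofReal (gammaScaleDensity ((n + 1 : ℕ) : ℝ) ρ x))
      (Iic t) = ENNReal.ofReal (1 - erlangTail (n + 1) ρ t) := by
  obtain ⟨hint, hval⟩ := integral_Ioc_gammaScaleDensity_natCast_succ n hρ ht
  rw [← Iic_union_Ioc_eq_Iic ht, measure_union (Iic_disjoint_Ioc le_rfl) measurableSet_Ioc,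
    withDensity_gammaScaleDensity_Iic_zero, zero_add, withDensity_apply _ measurableSet_Ioc,
    ← hval, ofReal_integral_eq_lintegral_ofReal hint
      (ae_of_all _ (gammaScaleDensity_nonneg (by positivity) hρ))]

lemma integrableOn_rpow_mul_exp_neg_mul {s l : ℝ} (hs : 0 < s) (hl : 0 < l) :
    IntegrableOn (fun y : ℝ => y ^ (s - 1) * exp (-(l * y))) (Ioi 0) :=
  (integrableOn_rpow_mul_exp_neg_mul_rpow (by linarith : (-1 : ℝ) < s - 1) one_pos hl).congr_fun
    (fun y _ => by simp only [rpow_one, neg_mul]) measurableSet_Ioi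

lemma integral_gammaScaleDensity {k ρ : ℝ} (hk : 0 < k) (hρ : 0 < ρ) :
    Integrable (gammaScaleDensity k ρ) ∧ ∫ x, gammaScaleDensity k ρ x = 1 := by
  have hzero : ∀ x ∉ Ioi (0 : ℝ), gammaScaleDensity k ρ x = 0 :=
    fun x hx => gammaScaleDensity_of_nonpos k ρ (not_lt.1 hx)
  have hform : EqOn (gammaScaleDensity k ρ)
      (fun x => ρ ^ (-k) / Gamma k * (x ^ (k - 1) * exp (-(ρ⁻¹ * x)))) (Ioi 0) := by
    intro x hx
    rw [gammaScaleDensity, if_pos (show 0 < x from hx), neg_div, div_eq_inv_mul x]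
    ring
  have hint : IntegrableOn (fun x => ρ ^ (-k) / Gamma k * (x ^ (k - 1) * exp (-(ρ⁻¹ * x))))
      (Ioi 0) := (integrableOn_rpow_mul_exp_neg_mul hk (inv_pos.2 hρ)).const_mul _
  refine ⟨(integrableOn_iff_integrable_of_support_subset
    (Function.support_subset_iff'.2 hzero)).1 (hint.congr_fun hform.symm measurableSet_Ioi), ?_⟩
  rw [← setIntegral_eq_integral_of_forall_compl_eq_zero hzero,
    setIntegral_congr_fun measurableSet_Ioi hform, integral_const_mul,
    integral_rpow_mul_exp_neg_mul_Ioi hk (inv_pos.2 hρ), one_div, inv_inv, rpow_neg hρ.le]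
  have := (Gamma_pos_of_pos hk).ne'
  have := (rpow_pos_of_pos hρ k).ne'
  field_simp

lemma rpow_mul_add_pow_eq_sum (s c z : ℝ) (a : ℕ) {y : ℝ} (hy : 0 < y) :
    y ^ (s - 1) * (c + z * y) ^ a =
      ∑ k ∈ Finset.range (a + 1), (a.choose k * z ^ k * c ^ (a - k)) * y ^ (k + s - 1) := by
  rw [add_comm c, add_pow, Finset.mul_sum]
  refine Finset.sum_congr rfl fun k _ => ?_
  rw [show (k : ℝ) + s - 1 = (s - 1) + k by ring, rpow_add hy, rpow_natCast, mul_pow]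
  ring

theorem integral_rpow_mul_add_pow_mul_exp_neg_mul {s l : ℝ} (hs : 0 < s) (hl : 0 < l)
    (c z : ℝ) (a : ℕ) :
    IntegrableOn (fun y : ℝ => y ^ (s - 1) * (c + z * y) ^ a * exp (-(l * y))) (Ioi 0) ∧
      ∫ y in Ioi 0, y ^ (s - 1) * (c + z * y) ^ a * exp (-(l * y)) =
        ∑ k ∈ Finset.range (a + 1),
          a.choose k * z ^ k * c ^ (a - k) * ((1 / l) ^ (k + s) * Gamma (k + s)) := by
  have hexpand : EqOn (fun y : ℝ => y ^ (s - 1) * (c + z * y) ^ a * exp (-(l * y)))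
      (fun y => ∑ k ∈ Finset.range (a + 1),
        (a.choose k * z ^ k * c ^ (a - k)) * (y ^ (k + s - 1) * exp (-(l * y)))) (Ioi 0) := by
    intro y hy
    simp only [rpow_mul_add_pow_eq_sum s c z a hy, Finset.sum_mul, mul_assoc]
  have hterm (k : ℕ) : IntegrableOn (fun y : ℝ => (a.choose k * z ^ k * c ^ (a - k)) *
      (y ^ (k + s - 1) * exp (-(l * y)))) (Ioi 0) :=
    (integrableOn_rpow_mul_exp_neg_mul (by positivity) hl).const_mul _
  refine ⟨IntegrableOn.congr_fun (integrable_finsetSum _ fun k _ => hterm k) hexpand.symm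
    measurableSet_Ioi, ?_⟩
  rw [setIntegral_congr_fun measurableSet_Ioi hexpand, integral_finsetSum _ fun k _ => hterm k]
  refine Finset.sum_congr rfl fun k _ => ?_
  rw [integral_const_mul, integral_rpow_mul_exp_neg_mul_Ioi (by positivity) hl]

lemma gammaScaleDensity_mul_erlangTail_eq_sum (n : ℕ) {ν ρB ρE : ℝ} (c z : ℝ) {y : ℝ}
    (hy : 0 < y) :
    gammaScaleDensity ν ρE y * erlangTail n ρB (c + z * y) =
      ∑ a ∈ Finset.range n, exp (-c / ρB) * ρE ^ (-ν) / (a ! * ρB ^ a * Gamma ν) *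
        (y ^ (ν - 1) * (c + z * y) ^ a * exp (-((ρE⁻¹ + z / ρB) * y))) := by
  have hexp : exp (-y / ρE) * exp (-(c + z * y) / ρB) =
      exp (-c / ρB) * exp (-((ρE⁻¹ + z / ρB) * y)) := by
    rw [← exp_add, ← exp_add]; ring_nf
  rw [gammaScaleDensity, if_pos hy, erlangTail, Finset.mul_sum, Finset.mul_sum]
  refine Finset.sum_congr rfl fun a _ => ?_
  rw [div_pow]
  linear_combination
    (y ^ (ν - 1) * ρE ^ (-ν) / Gamma ν * (c + z * y) ^ a / ρB ^ a / a !) * hexp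

theorem integral_gammaScaleDensity_mul_erlangTail (n : ℕ) {ν ρB ρE : ℝ} (hν : 0 < ν)
    (hρB : 0 < ρB) (hρE : 0 < ρE) (c : ℝ) {z : ℝ} (hz : 0 ≤ z) :
    Integrable (fun y => gammaScaleDensity ν ρE y * erlangTail n ρB (c + z * y)) ∧
      ∫ y, gammaScaleDensity ν ρE y * erlangTail n ρB (c + z * y) =
        exp (-c / ρB) * ∑ a ∈ Finset.range n, (1 / ((a ! : ℝ) * ρB ^ a * Gamma ν)) *
          ∑ k ∈ Finset.range (a + 1), (a.choose k : ℝ) * z ^ k * c ^ (a - k) *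
            Gamma (k + ν) * ρB ^ (k + ν) * ρE ^ k * (ρB + z * ρE) ^ (-(k + ν)) := by
  have hl : 0 < ρE⁻¹ + z / ρB := by positivity
  have hscale (k : ℕ) : ρE ^ (-ν) * (1 / (ρE⁻¹ + z / ρB)) ^ (k + ν) =
      ρB ^ (k + ν) * ρE ^ k * (ρB + z * ρE) ^ (-(k + ν)) := by
    have hsum : 0 < ρB + z * ρE := by positivity
    rw [show 1 / (ρE⁻¹ + z / ρB) = ρB * ρE / (ρB + z * ρE) by field_simp,
      div_rpow (by positivity) hsum.le, mul_rpow hρB.le hρE.le, rpow_neg hsum.le,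
      rpow_add hρE, rpow_natCast, rpow_neg hρE.le]
    field_simp
  have hI (a : ℕ) := integral_rpow_mul_add_pow_mul_exp_neg_mul hν hl c z a
  have hzero : ∀ y ∉ Ioi (0 : ℝ),
      gammaScaleDensity ν ρE y * erlangTail n ρB (c + z * y) = 0 :=
    fun y hy => by rw [gammaScaleDensity_of_nonpos ν ρE (not_lt.1 hy), zero_mul]
  have hsum : EqOn (fun y => gammaScaleDensity ν ρE y * erlangTail n ρB (c + z * y)) _
      (Ioi 0) :=
    fun y hy => gammaScaleDensity_mul_erlangTail_eq_sum n c z hy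
  refine ⟨(integrableOn_iff_integrable_of_support_subset
    (Function.support_subset_iff'.2 hzero)).1 (IntegrableOn.congr_fun
      (integrable_finsetSum _ fun a _ => (hI a).1.const_mul _) hsum.symm measurableSet_Ioi), ?_⟩
  rw [← setIntegral_eq_integral_of_forall_compl_eq_zero hzero,
    setIntegral_congr_fun measurableSet_Ioi hsum,
    integral_finsetSum _ fun a _ => (hI a).1.const_mul _, Finset.mul_sum]
  refine Finset.sum_congr rfl fun a _ => ?_
  rw [integral_const_mul, (hI a).2, Finset.mul_sum, Finset.mul_sum, Finset.mul_sum]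
  refine Finset.sum_congr rfl fun k _ => ?_
  linear_combination (exp (-c / ρB) / (a ! * ρB ^ a * Gamma ν) * a.choose k * z ^ k *
    c ^ (a - k) * Gamma (k + ν)) * hscale k

theorem integral_gammaScaleDensity_mul_one_sub_erlangTail (n : ℕ) {ν ρB ρE : ℝ}
    (hν : 0 < ν) (hρB : 0 < ρB) (hρE : 0 < ρE) (c : ℝ) {z : ℝ} (hz : 0 ≤ z) :
    Integrable (fun y => gammaScaleDensity ν ρE y * (1 - erlangTail n ρB (c + z * y))) ∧
      ∫ y, gammaScaleDensity ν ρE y * (1 - erlangTail n ρB (c + z * y)) =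
        1 - exp (-c / ρB) * ∑ a ∈ Finset.range n, (1 / ((a ! : ℝ) * ρB ^ a * Gamma ν)) *
          ∑ k ∈ Finset.range (a + 1), (a.choose k : ℝ) * z ^ k * c ^ (a - k) *
            Gamma (k + ν) * ρB ^ (k + ν) * ρE ^ k * (ρB + z * ρE) ^ (-(k + ν)) := by
  obtain ⟨hint₁, hval₁⟩ := integral_gammaScaleDensity hν hρE
  obtain ⟨hint₂, hval₂⟩ := integral_gammaScaleDensity_mul_erlangTail n hν hρB hρE c hz
  simp_rw [mul_one_sub]
  exact ⟨hint₁.sub hint₂, by rw [integral_sub hint₁ hint₂, hval₁, hval₂]⟩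

theorem measure_le_comp_eq_lintegral_map {Ω : Type*} [MeasurableSpace Ω] {P : Measure Ω}
    [IsFiniteMeasure P] {X Y : Ω → ℝ} (hX : Measurable X) (hY : Measurable Y)
    (hind : IndepFun X Y P) {g : ℝ → ℝ} (hg : Measurable g) :
    P {ω | X ω ≤ g (Y ω)} = ∫⁻ y, P.map X (Iic (g y)) ∂(P.map Y) := by
  have hs : MeasurableSet {p : ℝ × ℝ | p.1 ≤ g p.2} :=
    measurableSet_le measurable_fst (hg.comp measurable_snd)
  calc P {ω | X ω ≤ g (Y ω)} = P.map (fun ω => (X ω, Y ω)) {p | p.1 ≤ g p.2} :=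
        (Measure.map_apply (hX.prodMk hY) hs).symm
    _ = (P.map X).prod (P.map Y) {p | p.1 ≤ g p.2} := by
        rw [hind.map_prod_eq_prod_map_map hX.aemeasurable hY.aemeasurable]
    _ = ∫⁻ y, P.map X (Iic (g y)) ∂(P.map Y) := Measure.prod_apply_symm hs

lemma one_add_div_one_add_le_iff {x y z : ℝ} (hy : 0 < 1 + y) :
    (1 + x) / (1 + y) ≤ z ↔ x ≤ z - 1 + z * y := by
  rw [div_le_iff₀ hy]
  constructor <;> intro h <;> linarith

lemma ofReal_gammaScaleDensity_mul_withDensity_Iic (m : ℕ) {ν ρB ρE c z : ℝ} (hν : 0 < ν)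
    (hρB : 0 < ρB) (hρE : 0 < ρE) (hc : 0 ≤ c) (hz : 0 ≤ z) (y : ℝ) :
    ENNReal.ofReal (gammaScaleDensity ν ρE y) *
        volume.withDensity (fun x => ENNReal.ofReal (gammaScaleDensity ((m + 1 : ℕ) : ℝ) ρB x))
          (Iic (c + z * y)) =
      ENNReal.ofReal (gammaScaleDensity ν ρE y * (1 - erlangTail (m + 1) ρB (c + z * y))) := by
  rcases le_or_gt y 0 with hy | hy
  · simp [gammaScaleDensity_of_nonpos ν ρE hy]
  · rw [withDensity_gammaScaleDensity_natCast_succ_Iic m hρB (by positivity),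
      ENNReal.ofReal_mul (gammaScaleDensity_nonneg hν hρE y)]

lemma gammaScaleDensity_mul_one_sub_erlangTail_nonneg (n : ℕ) {ν ρB ρE c z : ℝ}
    (hν : 0 < ν) (hρB : 0 < ρB) (hρE : 0 < ρE) (hc : 0 ≤ c) (hz : 0 ≤ z) (y : ℝ) :
    0 ≤ gammaScaleDensity ν ρE y * (1 - erlangTail n ρB (c + z * y)) := by
  rcases le_or_gt y 0 with hy | hy
  · simp [gammaScaleDensity_of_nonpos ν ρE hy]
  · exact mul_nonneg (gammaScaleDensity_nonneg hν hρE y)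
      (sub_nonneg.2 (erlangTail_le_one n hρB (by positivity)))

/-- Single-term instance of Proposition 2: closed-form CDF of `Φ = (1+X)/(1+Y)` for
independent Gamma-distributed `X` (integer shape `n`, scale `ρB`) and `Y`
(shape `ν`, scale `ρE`). -/
theorem stmt15 {Ω : Type*} [MeasurableSpace Ω] (P : Measure Ω) [IsProbabilityMeasure P]
    (n : ℕ) (hn : 0 < n) (ν ρB ρE : ℝ) (hν : 0 < ν) (hρB : 0 < ρB) (hρE : 0 < ρE)
    (X Y : Ω → ℝ) (hX : Measurable X) (hY : Measurable Y)
    (hind : ProbabilityTheory.IndepFun X Y P)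
    (hXlaw : Measure.map X P =
      volume.withDensity (fun x => ENNReal.ofReal (gammaScaleDensity n ρB x)))
    (hYlaw : Measure.map Y P =
      volume.withDensity (fun y => ENNReal.ofReal (gammaScaleDensity ν ρE y))) :
    ∀ z : ℝ, 1 ≤ z → (P {ω | (1 + X ω) / (1 + Y ω) ≤ z}).toReal =
      1 - Real.exp (-(z - 1) / ρB) * ∑ a ∈ Finset.range n,
        (1 / ((a.factorial : ℝ) * ρB ^ a * Real.Gamma ν)) *
          ∑ k ∈ Finset.range (a + 1),
            (a.choose k : ℝ) * z ^ k * (z - 1) ^ (a - k) * Real.Gamma ((k : ℝ) + ν) *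
              ρB ^ ((k : ℝ) + ν) * ρE ^ k * (ρB + z * ρE) ^ (-((k : ℝ) + ν)) := by
  intro z hz
  obtain ⟨m, rfl⟩ : ∃ m, n = m + 1 := ⟨n - 1, by omega⟩
  have hc : 0 ≤ z - 1 := by linarith
  have hz₀ : 0 ≤ z := by linarith
  have hYpos : ∀ᵐ ω ∂P, 0 < Y ω := by
    have hnull : P (Y ⁻¹' Iic 0) = 0 := by
      rw [← Measure.map_apply hY measurableSet_Iic, hYlaw,
        withDensity_gammaScaleDensity_Iic_zero]
    exact ae_iff.2 (by simp only [not_lt]; exact hnull)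
  have hevent : {ω | (1 + X ω) / (1 + Y ω) ≤ z} =ᵐ[P] {ω | X ω ≤ z - 1 + z * Y ω} :=
    hYpos.mono fun ω hω => propext (one_add_div_one_add_le_iff (by linarith))
  obtain ⟨hint, hval⟩ :=
    integral_gammaScaleDensity_mul_one_sub_erlangTail (m + 1) hν hρB hρE (z - 1) hz₀
  rw [measure_congr hevent,
    measure_le_comp_eq_lintegral_map hX hY hind (g := fun y => z - 1 + z * y) (by fun_prop),
    hXlaw, hYlaw, lintegral_withDensity_eq_lintegral_mul_non_measurable _
      (measurable_gammaScaleDensity ν ρE).ennreal_ofReal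
      (ae_of_all _ fun _ => ENNReal.ofReal_lt_top)]
  simp only [Pi.mul_apply, ofReal_gammaScaleDensity_mul_withDensity_Iic m hν hρB hρE hc hz₀]
  rw [← integral_eq_lintegral_of_nonneg_ae (ae_of_all _
      (gammaScaleDensity_mul_one_sub_erlangTail_nonneg _ hν hρB hρE hc hz₀))
    hint.aestronglyMeasurable, hval]
end

section
/- Let κ > 0, z ≥ 1, and let Y be a nonnegative random variable with E[((Y+1)·z − 1)^κ] < ∞. For each ρ > 0, let F_ρ : ℝ → ℝ denote the Gamma(κ, ρ) CDF, F_ρ(x) = γ(κ, x/ρ)/Γ(κ) for x ≥ 0 and F_ρ(x) = 0 for x < 0, where γ(s, x) = ∫_0^x t^{s−1} e^{−t} dt is the lower incomplete gamma function. Then lim_{ρ→∞} ρ^κ · E[F_ρ((Y+1)·z − 1)] = E[((Y+1)·z − 1)^κ] / Γ(κ+1). Equivalently, if X_ρ is Gamma(κ, ρ)-distributed and independent of Y, then lim_{ρ→∞} ρ^κ · P((1+X_ρ)/(1+Y) ≤ z) = E[((Y+1)·z − 1)^κ] / Γ(κ+1). -/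
/-!
Write `γ(κ, y) = ∫₀^y t^(κ-1) e^(-t) dt`. Since `e^(-y) ≤ e^(-t) ≤ 1` on `[0, y]`, we have
`e^(-y) y^κ / κ ≤ γ(κ, y) ≤ y^κ / κ`, so `ρ^κ γ(κ, x/ρ)` is squeezed between `e^(-x/ρ) x^κ / κ`
and `x^κ / κ` and tends to `x^κ / κ`. The upper bound is integrable by assumption, so dominated
convergence lets the limit pass under the expectation, and `κ Γ(κ) = Γ(κ+1)`.
-/

open MeasureTheory Filter Topology

namespace Real

noncomputable def lowerIncGamma (s x : ℝ) : ℝ := ∫ t in (0 : ℝ)..x, t ^ (s - 1) * exp (-t)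

variable {κ : ℝ}

theorem intervalIntegrable_rpow_sub_one_mul_exp_neg (hκ : 0 < κ) (a b : ℝ) :
    IntervalIntegrable (fun t => t ^ (κ - 1) * exp (-t)) volume a b :=
  (intervalIntegral.intervalIntegrable_rpow' (by linarith)).mul_continuousOn
    (continuous_exp.comp continuous_neg).continuousOn

theorem continuous_lowerIncGamma (hκ : 0 < κ) : Continuous (lowerIncGamma κ) :=
  intervalIntegral.continuous_primitive (intervalIntegrable_rpow_sub_one_mul_exp_neg hκ) 0

theorem integral_rpow_sub_one (hκ : 0 < κ) (y : ℝ) :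
    ∫ t in (0 : ℝ)..y, t ^ (κ - 1) = y ^ κ / κ := by
  rw [integral_rpow (Or.inl (by linarith)), sub_add_cancel, zero_rpow hκ.ne', sub_zero]

theorem exp_neg_mul_rpow_div_le_lowerIncGamma (hκ : 0 < κ) {y : ℝ} (hy : 0 ≤ y) :
    exp (-y) * (y ^ κ / κ) ≤ lowerIncGamma κ y := by
  rw [← integral_rpow_sub_one hκ, ← intervalIntegral.integral_const_mul]
  refine intervalIntegral.integral_mono_on hy
    ((intervalIntegral.intervalIntegrable_rpow' (by linarith)).const_mul _)
    (intervalIntegrable_rpow_sub_one_mul_exp_neg hκ 0 y) fun t ht => ?_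
  rw [mul_comm]
  gcongr
  · exact rpow_nonneg ht.1 _
  · exact ht.2

theorem lowerIncGamma_le_rpow_div (hκ : 0 < κ) {y : ℝ} (hy : 0 ≤ y) :
    lowerIncGamma κ y ≤ y ^ κ / κ := by
  rw [← integral_rpow_sub_one hκ]
  refine intervalIntegral.integral_mono_on hy
    (intervalIntegrable_rpow_sub_one_mul_exp_neg hκ 0 y)
    (intervalIntegral.intervalIntegrable_rpow' (by linarith)) fun t ht => ?_
  exact mul_le_of_le_one_right (rpow_nonneg ht.1 _) (exp_le_one_iff.2 (by linarith [ht.1]))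

theorem lowerIncGamma_nonneg (hκ : 0 < κ) {y : ℝ} (hy : 0 ≤ y) : 0 ≤ lowerIncGamma κ y :=
  le_trans (by positivity) (exp_neg_mul_rpow_div_le_lowerIncGamma hκ hy)

theorem rpow_mul_lowerIncGamma_div_le (hκ : 0 < κ) {x ρ : ℝ} (hx : 0 ≤ x) (hρ : 0 < ρ) :
    ρ ^ κ * lowerIncGamma κ (x / ρ) ≤ x ^ κ / κ := by
  calc ρ ^ κ * lowerIncGamma κ (x / ρ) ≤ ρ ^ κ * ((x / ρ) ^ κ / κ) := by
        gcongr; exact lowerIncGamma_le_rpow_div hκ (by positivity)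
    _ = x ^ κ / κ := by
        rw [div_rpow hx hρ.le]; field_simp [(rpow_pos_of_pos hρ κ).ne']

theorem tendsto_rpow_mul_lowerIncGamma_div_atTop (hκ : 0 < κ) {x : ℝ} (hx : 0 ≤ x) :
    Tendsto (fun ρ => ρ ^ κ * lowerIncGamma κ (x / ρ)) atTop (𝓝 (x ^ κ / κ)) := by
  have hlower : Tendsto (fun ρ => exp (-(x / ρ)) * (x ^ κ / κ)) atTop (𝓝 (x ^ κ / κ)) := by
    have h : Tendsto (fun ρ : ℝ => -(x / ρ)) atTop (𝓝 0) := by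
      simpa using (tendsto_id.const_div_atTop x).neg
    simpa using ((continuous_exp.tendsto 0).comp h).mul_const (x ^ κ / κ)
  refine tendsto_of_tendsto_of_tendsto_of_le_of_le' hlower tendsto_const_nhds ?_ ?_
  · filter_upwards [eventually_gt_atTop 0] with ρ hρ
    calc exp (-(x / ρ)) * (x ^ κ / κ) = ρ ^ κ * (exp (-(x / ρ)) * ((x / ρ) ^ κ / κ)) := by
          rw [div_rpow hx hρ.le]; field_simp [(rpow_pos_of_pos hρ κ).ne']
      _ ≤ ρ ^ κ * lowerIncGamma κ (x / ρ) := by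
          gcongr; exact exp_neg_mul_rpow_div_le_lowerIncGamma hκ (by positivity)
  · filter_upwards [eventually_gt_atTop 0] with ρ hρ
    exact rpow_mul_lowerIncGamma_div_le hκ hx hρ

end Real

open Real in
theorem tendsto_integral_rpow_mul_lowerIncGamma_div_atTop {Ω : Type*} [MeasurableSpace Ω]
    {μ : Measure Ω} {κ : ℝ} (hκ : 0 < κ) {g : Ω → ℝ} (hg : Measurable g) (hg0 : ∀ ω, 0 ≤ g ω)
    (hint : Integrable (fun ω => g ω ^ κ) μ) :
    Tendsto (fun ρ => ∫ ω, ρ ^ κ * lowerIncGamma κ (g ω / ρ) ∂μ) atTop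
      (𝓝 (∫ ω, g ω ^ κ / κ ∂μ)) := by
  refine tendsto_integral_filter_of_dominated_convergence (fun ω => g ω ^ κ / κ)
    (Eventually.of_forall fun ρ =>
      (((continuous_lowerIncGamma hκ).measurable.comp
        (hg.div_const ρ)).const_mul _).aestronglyMeasurable) ?_ (hint.div_const κ)
    (ae_of_all _ fun ω => tendsto_rpow_mul_lowerIncGamma_div_atTop hκ (hg0 ω))
  filter_upwards [eventually_gt_atTop 0] with ρ hρ
  refine ae_of_all _ fun ω => ?_
  rw [norm_of_nonneg (mul_nonneg (rpow_nonneg hρ.le κ)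
    (lowerIncGamma_nonneg hκ (div_nonneg (hg0 ω) hρ.le)))]
  exact rpow_mul_lowerIncGamma_div_le hκ (hg0 ω) hρ

theorem stmt16_general {Ω : Type*} [MeasurableSpace Ω] (P : Measure Ω)
    (κ z : ℝ) (hκ : 0 < κ) (hz : 1 ≤ z)
    (Y : Ω → ℝ) (hY : Measurable Y) (hYnonneg : ∀ ω, 0 ≤ Y ω)
    (hint : Integrable (fun ω => ((Y ω + 1) * z - 1) ^ κ) P)
    (F : ℝ → ℝ → ℝ)
    (hF : ∀ ρ x, F ρ x = if x < 0 then 0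
      else (∫ t in (0:ℝ)..(x / ρ), t ^ (κ - 1) * Real.exp (-t)) / Real.Gamma κ) :
    Tendsto (fun ρ : ℝ => ρ ^ κ * ∫ ω, F ρ ((Y ω + 1) * z - 1) ∂P) atTop
      (nhds ((∫ ω, ((Y ω + 1) * z - 1) ^ κ ∂P) / Real.Gamma (κ + 1))) := by
  have hg0 : ∀ ω, 0 ≤ (Y ω + 1) * z - 1 := fun ω => by nlinarith [hYnonneg ω]
  have hlim := (tendsto_integral_rpow_mul_lowerIncGamma_div_atTop hκ
    (((hY.add_const 1).mul_const z).sub_const 1) hg0 hint).div_const (Real.Gamma κ)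
  rw [integral_div, div_div, ← Real.Gamma_add_one hκ.ne'] at hlim
  refine hlim.congr fun ρ => ?_
  rw [← integral_div, ← integral_const_mul]
  congr 1 with ω
  rw [hF, if_neg (hg0 ω).not_gt, Real.lowerIncGamma, mul_div_assoc]

/-- Proposition 7 (asymptotic GSOP): with `F ρ` the Gamma(`κ`, scale `ρ`) CDF,
`ρ^κ · E[F ρ ((Y+1)z - 1)] → E[((Y+1)z - 1)^κ] / Γ(κ+1)` as `ρ → ∞`,
so the outage probability has diversity order `κ`. -/
theorem stmt16 {Ω : Type*} [MeasurableSpace Ω] (P : Measure Ω) [IsProbabilityMeasure P]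
    (κ z : ℝ) (hκ : 0 < κ) (hz : 1 ≤ z)
    (Y : Ω → ℝ) (hY : Measurable Y) (hYnonneg : ∀ ω, 0 ≤ Y ω)
    (hint : Integrable (fun ω => ((Y ω + 1) * z - 1) ^ κ) P)
    (F : ℝ → ℝ → ℝ)
    (hF : ∀ ρ x, F ρ x = if x < 0 then 0
      else (∫ t in (0:ℝ)..(x / ρ), t ^ (κ - 1) * Real.exp (-t)) / Real.Gamma κ) :
    Tendsto (fun ρ : ℝ => ρ ^ κ * ∫ ω, F ρ ((Y ω + 1) * z - 1) ∂P) atTop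
      (nhds ((∫ ω, ((Y ω + 1) * z - 1) ^ κ ∂P) / Real.Gamma (κ + 1))) :=
  stmt16_general P κ z hκ hz Y hY hYnonneg hint F hF
end
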